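/- Let p = (p₁,p₂) be an integer pair with 0 ≤ p₁ ≤ p₂, let Ω ⊆ ℝ² be open, let f be continuously differentiable on Ω, and let x ∈ Ω. Then lim_{l→0⁺} (1/l²) · Σ_{D(x',l) ∼_p D(x,l)} ( I(f,x',l) − I(f,x,l) )² = 4 (p₁² + p₂²) c_p |∇f(x)|². -/

import Mathlib

open MeasureTheory Real Filter Topology

noncomputable section

/-- The `l`-square centered at `x`. -/
def Dsq (x : ℝ × ℝ) (l : ℝ) : Set (ℝ × ℝ) :=
  Set.Icc (x.1 - l / 2) (x.1 + l / 2) ×ˢ Set.Icc (x.2 - l / 2) (x.2 + l / 2)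

/-- `I(f,x,l)`: the average of `f` over the `l`-square centered at `x`. -/
def Iavg (f : ℝ × ℝ → ℝ) (x : ℝ × ℝ) (l : ℝ) : ℝ :=
  (1 / l ^ 2) * ∫ ξ in Dsq x l, f ξ

/-- `D(x',l)` is a `p`-neighbor of `D(x,l)`. -/
def isNbr (p : ℤ × ℤ) (l : ℝ) (x x' : ℝ × ℝ) : Prop :=
  (|x'.1 - x.1| = (p.1 : ℝ) * l ∧ |x'.2 - x.2| = (p.2 : ℝ) * l) ∨
    (|x'.1 - x.1| = (p.2 : ℝ) * l ∧ |x'.2 - x.2| = (p.1 : ℝ) * l)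

/-- `I_p(f,x,l)`: sum of averages over all `p`-neighbors of `D(x,l)`. -/
def Ipavg (f : ℝ × ℝ → ℝ) (p : ℤ × ℤ) (x : ℝ × ℝ) (l : ℝ) : ℝ :=
  ∑ᶠ x' ∈ {x' : ℝ × ℝ | isNbr p l x x'}, Iavg f x' l

/-- The constant `c_p` (for integer pairs with `0 ≤ p₁ ≤ p₂`). -/
def cP (p : ℤ × ℤ) : ℝ :=
  if p.1 = 0 ∧ p.2 = 0 then 1 / 8 else if p.1 = 0 ∨ p.1 = p.2 then 1 / 2 else 1

/-- The constant `T_p^(k)`. -/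
def Tc (p : ℤ × ℤ) (k : ℕ) : ℝ :=
  2 * cP p *
    (((2 * (p.1 : ℂ) + 1) + (2 * (p.2 : ℂ) + 1) * Complex.I) ^ (4 * k + 2)
      - ((2 * (p.1 : ℂ) - 1) + (2 * (p.2 : ℂ) + 1) * Complex.I) ^ (4 * k + 2)
      + ((2 * (p.1 : ℂ) - 1) + (2 * (p.2 : ℂ) - 1) * Complex.I) ^ (4 * k + 2)
      - ((2 * (p.1 : ℂ) + 1) + (2 * (p.2 : ℂ) - 1) * Complex.I) ^ (4 * k + 2)).im

/-- The polynomial harmonic function `f_n^x`. -/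
def fP (x : ℝ × ℝ) (n : ℕ) (ξ : ℝ × ℝ) : ℝ :=
  ∑ j ∈ Finset.range (n / 2 + 1),
    (-1 : ℝ) ^ j * (ξ.1 - x.1) ^ (n - 2 * j) * (ξ.2 - x.2) ^ (2 * j) /
      (((n - 2 * j).factorial : ℝ) * ((2 * j).factorial : ℝ))

/-- The polynomial harmonic function `g_n^x`. -/
def gP (x : ℝ × ℝ) (n : ℕ) (ξ : ℝ × ℝ) : ℝ :=
  ∑ j ∈ Finset.range ((n - 1) / 2 + 1),
    (-1 : ℝ) ^ j * (ξ.1 - x.1) ^ (n - 2 * j - 1) * (ξ.2 - x.2) ^ (2 * j + 1) /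
      (((n - 2 * j - 1).factorial : ℝ) * ((2 * j + 1).factorial : ℝ))

/-- Partial derivative in the first coordinate. -/
def pd1 (f : ℝ × ℝ → ℝ) (y : ℝ × ℝ) : ℝ := fderiv ℝ f y (1, 0)

/-- Partial derivative in the second coordinate. -/
def pd2 (f : ℝ × ℝ → ℝ) (y : ℝ × ℝ) : ℝ := fderiv ℝ f y (0, 1)

/-- `h` is harmonic on the open set `Ω`. -/
def HarmonicOn (h : ℝ × ℝ → ℝ) (Ω : Set (ℝ × ℝ)) : Prop :=
  ContDiffOn ℝ 2 h Ω ∧ ∀ y ∈ Ω, pd1 (pd1 h) y + pd2 (pd2 h) y = 0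

/-- `‖𝒫‖ = max_{p ∈ 𝒫} ‖2p+(1,1)‖`. -/
def PNorm (P : Finset (ℤ × ℤ)) : ℝ :=
  sSup ((fun p : ℤ × ℤ =>
    Real.sqrt ((2 * (p.1 : ℝ) + 1) ^ 2 + (2 * (p.2 : ℝ) + 1) ^ 2)) '' ↑P)

/-- The four corners of the unit square. -/
def qv : Fin 4 → ℝ × ℝ := ![(0, 0), (1, 0), (1, 1), (0, 1)]

/-- The contraction `F_i(x) = (x + q_i)/2`. -/
def Fc (i : Fin 4) (x : ℝ × ℝ) : ℝ × ℝ := ((x.1 + (qv i).1) / 2, (x.2 + (qv i).2) / 2)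

/-- `F_w = F_{w₁} ∘ ⋯ ∘ F_{w_m}` for a word `w` of length `m`. -/
def Fword {m : ℕ} (w : Fin m → Fin 4) : ℝ × ℝ → ℝ × ℝ :=
  (List.ofFn w).foldr (fun i acc => Fc i ∘ acc) id

/-- The center of the `m`-cell `F_w S`. -/
def cellCtr {m : ℕ} (w : Fin m → Fin 4) : ℝ × ℝ := Fword w (1 / 2, 1 / 2)

/-- `B_w(f)`: the average of `f` over the `m`-cell `F_w S` (a dyadic square of
side length `2⁻ᵐ` centered at `cellCtr w`). -/
def Bav (f : ℝ × ℝ → ℝ) {m : ℕ} (w : Fin m → Fin 4) : ℝ :=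
  Iavg f (cellCtr w) ((1 / 2) ^ m)

/-! Every `p`-neighbor of `D(x, l)` is `D(x + l • v, l)` for `v` in the finite set
`N_p = nbrOffsets p`. Since `f` is strictly differentiable at `x`, translating the square by
`l • v` changes the average of `f` by `l ∇f(x)·v + o(l)`, so the normalized sum tends to
`∑_{v ∈ N_p} (∇f(x)·v)²`. The set `N_p` is invariant under the symmetries of the square and lies
on the circle of radius `|p|`, which makes this quadratic form `|∇f(x)|² |p|² #N_p / 2`;
finally `#N_p = 8 c_p`. -/

theorem sum_linear_sq_of_dihedral_invariant (F : Finset (ℝ × ℝ))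
    (hneg : ∀ v ∈ F, (-v.1, v.2) ∈ F) (hswap : ∀ v ∈ F, v.swap ∈ F) {r : ℝ}
    (hr : ∀ v ∈ F, v.1 ^ 2 + v.2 ^ 2 = r) (a b : ℝ) :
    ∑ v ∈ F, (a * v.1 + b * v.2) ^ 2 = (a ^ 2 + b ^ 2) * r * F.card / 2 := by
  have hcross : ∑ v ∈ F, v.1 * v.2 = -∑ v ∈ F, v.1 * v.2 := by
    rw [← Finset.sum_neg_distrib]
    exact Finset.sum_nbij' (fun v ↦ (-v.1, v.2)) (fun v ↦ (-v.1, v.2)) hneg hneg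
      (by simp) (by simp) (by simp)
  have hsq : ∑ v ∈ F, v.1 ^ 2 = ∑ v ∈ F, v.2 ^ 2 :=
    Finset.sum_nbij' Prod.swap Prod.swap hswap hswap (by simp) (by simp) (by simp)
  have hnorm : ∑ v ∈ F, v.1 ^ 2 + ∑ v ∈ F, v.2 ^ 2 = F.card * r := by
    rw [← Finset.sum_add_distrib, Finset.sum_congr rfl hr, Finset.sum_const, nsmul_eq_mul]
  have hexpand : ∑ v ∈ F, (a * v.1 + b * v.2) ^ 2 =
      a ^ 2 * ∑ v ∈ F, v.1 ^ 2 + b ^ 2 * ∑ v ∈ F, v.2 ^ 2 + 2 * a * b * ∑ v ∈ F, v.1 * v.2 := by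
    simp only [Finset.mul_sum, ← Finset.sum_add_distrib]
    exact Finset.sum_congr rfl fun v _ ↦ by ring
  rw [hexpand]
  linear_combination (a ^ 2 - b ^ 2) / 2 * hsq + (a ^ 2 + b ^ 2) / 2 * hnorm + a * b * hcross

theorem ContinuousLinearMap.apply_eq_mul_fst_add_mul_snd (L : ℝ × ℝ →L[ℝ] ℝ) (v : ℝ × ℝ) :
    L v = L (1, 0) * v.1 + L (0, 1) * v.2 := by
  have hv : v = v.1 • ((1 : ℝ), (0 : ℝ)) + v.2 • ((0 : ℝ), (1 : ℝ)) := by ext <;> simp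
  conv_lhs => rw [hv]
  rw [map_add, map_smul, map_smul, smul_eq_mul, smul_eq_mul, mul_comm v.1, mul_comm v.2]

section Squares

variable {x ξ : ℝ × ℝ} {l : ℝ}

theorem mem_Dsq_iff : ξ ∈ Dsq x l ↔ |ξ.1 - x.1| ≤ l / 2 ∧ |ξ.2 - x.2| ≤ l / 2 := by
  simp only [Dsq, Set.mem_prod, Set.mem_Icc, abs_sub_le_iff]
  constructor <;> rintro ⟨⟨_, _⟩, _, _⟩ <;> refine ⟨⟨?_, ?_⟩, ?_, ?_⟩ <;> linarith

theorem norm_sub_le_of_mem_Dsq (h : ξ ∈ Dsq x l) : ‖ξ - x‖ ≤ l / 2 := by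
  rw [mem_Dsq_iff] at h
  simpa only [Prod.norm_def, Prod.fst_sub, Prod.snd_sub, Real.norm_eq_abs, max_le_iff] using h

theorem isCompact_Dsq (x : ℝ × ℝ) (l : ℝ) : IsCompact (Dsq x l) :=
  isCompact_Icc.prod isCompact_Icc

theorem volume_real_Dsq (x : ℝ × ℝ) (hl : 0 ≤ l) : volume.real (Dsq x l) = l ^ 2 := by
  rw [Dsq, Measure.volume_eq_prod, measureReal_prod_prod, Real.volume_real_Icc_of_le (by linarith),
    Real.volume_real_Icc_of_le (by linarith)]
  ring

theorem preimage_add_right_Dsq (x a : ℝ × ℝ) (l : ℝ) :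
    (· + a) ⁻¹' Dsq (x + a) l = Dsq x l := by
  ext ξ
  simp [mem_Dsq_iff]

theorem Iavg_add_right (f : ℝ × ℝ → ℝ) (x a : ℝ × ℝ) (l : ℝ) :
    Iavg f (x + a) l = Iavg (fun ξ ↦ f (ξ + a)) x l := by
  rw [Iavg, Iavg, ← preimage_add_right_Dsq x a l,
    (measurePreserving_add_right volume a).setIntegral_preimage_emb
      (measurableEmbedding_addRight a)]

theorem Iavg_sub {f g : ℝ × ℝ → ℝ} (hf : IntegrableOn f (Dsq x l))
    (hg : IntegrableOn g (Dsq x l)) :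
    Iavg (fun ξ ↦ f ξ - g ξ) x l = Iavg f x l - Iavg g x l := by
  rw [Iavg, Iavg, Iavg, integral_sub hf hg, mul_sub]

theorem abs_Iavg_sub_le {g : ℝ × ℝ → ℝ} {c δ : ℝ} (hl : 0 < l) (hg : IntegrableOn g (Dsq x l))
    (hbound : ∀ ξ ∈ Dsq x l, |g ξ - c| ≤ δ) : |Iavg g x l - c| ≤ δ := by
  have hvol : volume (Dsq x l) < ⊤ := (isCompact_Dsq x l).measure_lt_top
  have hconst : IntegrableOn (fun _ ↦ c) (Dsq x l) := integrableOn_const hvol.ne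
  have hIavg : Iavg g x l - c = 1 / l ^ 2 * ∫ ξ in Dsq x l, (g ξ - c) := by
    rw [Iavg, integral_sub hg hconst, setIntegral_const, volume_real_Dsq x hl.le, smul_eq_mul]
    field_simp
  have hint : |∫ ξ in Dsq x l, (g ξ - c)| ≤ δ * l ^ 2 := by
    simpa only [Real.norm_eq_abs, volume_real_Dsq x hl.le] using
      norm_setIntegral_le_of_norm_le_const hvol fun ξ hξ ↦ (Real.norm_eq_abs _).trans_le (hbound ξ hξ)
  rw [hIavg, abs_mul, abs_of_pos (by positivity)]
  calc 1 / l ^ 2 * |∫ ξ in Dsq x l, (g ξ - c)| ≤ 1 / l ^ 2 * (δ * l ^ 2) := by gcongr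
    _ = δ := by field_simp

theorem eventually_forall_Dsq_add_smul_mem {s : Set (ℝ × ℝ)} (hs : s ∈ 𝓝 x) (v : ℝ × ℝ) :
    ∀ᶠ l in 𝓝 (0 : ℝ), ∀ ξ ∈ Dsq x l, ξ + l • v ∈ s := by
  obtain ⟨r, hr, hball⟩ := Metric.mem_nhds_iff.1 hs
  have hsmall : Tendsto (fun l : ℝ ↦ |l| * (1 / 2 + ‖v‖)) (𝓝 0) (𝓝 0) :=
    (continuous_abs.mul continuous_const).tendsto' 0 0 (by simp)
  filter_upwards [hsmall.eventually (gt_mem_nhds hr)] with l hl ξ hξ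
  apply hball
  rw [Metric.mem_ball, dist_eq_norm]
  calc ‖ξ + l • v - x‖ = ‖(ξ - x) + l • v‖ := by rw [add_sub_right_comm]
    _ ≤ ‖ξ - x‖ + ‖l • v‖ := norm_add_le _ _
    _ ≤ |l| / 2 + |l| * ‖v‖ := by
      rw [norm_smul, Real.norm_eq_abs]
      gcongr
      exact (norm_sub_le_of_mem_Dsq hξ).trans (by linarith [le_abs_self l])
    _ < r := by linarith

end Squares

section StrictDeriv

variable {f : ℝ × ℝ → ℝ} {f' : ℝ × ℝ →L[ℝ] ℝ} {x : ℝ × ℝ}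

theorem eventually_abs_Iavg_sub_sub_le (hf : HasStrictFDerivAt f f' x)
    (v : ℝ × ℝ) {c : NNReal} (hc : 0 < c) :
    ∀ᶠ l in 𝓝[>] 0, |Iavg f (x + l • v) l - Iavg f x l - l * f' v| ≤ c * (l * ‖v‖) := by
  obtain ⟨s, hs, hfs⟩ := hf.approximates_deriv_on_nhds (Or.inr hc)
  filter_upwards [self_mem_nhdsWithin,
    nhdsWithin_le_nhds (eventually_forall_Dsq_add_smul_mem hs v),
    nhdsWithin_le_nhds (eventually_forall_Dsq_add_smul_mem hs 0)] with l (hl : 0 < l) hsv hs0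
  have hsub : Dsq x l ⊆ s := fun ξ hξ ↦ by simpa using hs0 ξ hξ
  have hint : IntegrableOn f (Dsq x l) :=
    (hfs.continuousOn.mono hsub).integrableOn_compact (isCompact_Dsq x l)
  have hint_v : IntegrableOn (fun ξ ↦ f (ξ + l • v)) (Dsq x l) :=
    (hfs.continuousOn.comp (continuousOn_id.add continuousOn_const) hsv).integrableOn_compact
      (isCompact_Dsq x l)
  rw [Iavg_add_right, ← Iavg_sub hint_v hint]
  refine abs_Iavg_sub_le hl (hint_v.sub hint) fun ξ hξ ↦ ?_
  have := hfs _ (hsv ξ hξ) _ (hsub hξ)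
  simpa [norm_smul, abs_of_pos hl, Real.norm_eq_abs] using this

theorem tendsto_Iavg_slope (hf : HasStrictFDerivAt f f' x) (v : ℝ × ℝ) :
    Tendsto (fun l ↦ (Iavg f (x + l • v) l - Iavg f x l) / l) (𝓝[>] 0) (𝓝 (f' v)) := by
  rw [Metric.tendsto_nhds]
  intro ε hε
  have hc : (0 : ℝ) < ε / (2 * (‖v‖ + 1)) := by positivity
  filter_upwards [self_mem_nhdsWithin,
    eventually_abs_Iavg_sub_sub_le hf v (Real.toNNReal_pos.2 hc)] with l (hl : 0 < l) h
  rw [Real.coe_toNNReal _ hc.le] at h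
  rw [Real.dist_eq, show ∀ d : ℝ, d / l - f' v = (d - l * f' v) / l by intro d; field_simp,
    abs_div, abs_of_pos hl, div_lt_iff₀ hl]
  calc _ ≤ ε / (2 * (‖v‖ + 1)) * (l * ‖v‖) := h
    _ < ε * l := by
      rw [div_mul_eq_mul_div, div_lt_iff₀ (by positivity)]
      nlinarith [mul_pos hε hl, norm_nonneg v]

theorem tendsto_sq_Iavg_sub_div_sq (hf : HasStrictFDerivAt f f' x)
    (v : ℝ × ℝ) :
    Tendsto (fun l ↦ 1 / l ^ 2 * (Iavg f (x + l • v) l - Iavg f x l) ^ 2) (𝓝[>] 0)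
      (𝓝 (f' v ^ 2)) :=
  ((tendsto_Iavg_slope hf v).pow 2).congr fun l ↦ by ring

end StrictDeriv

section Neighbors

def nbrOffsets (p : ℤ × ℤ) : Set (ℝ × ℝ) :=
  {t : ℝ | |t| = p.1} ×ˢ {t : ℝ | |t| = p.2} ∪ {t : ℝ | |t| = p.2} ×ˢ {t : ℝ | |t| = p.1}

variable {p : ℤ × ℤ} {v : ℝ × ℝ}

theorem isNbr_add_smul_iff {l : ℝ} (hl : 0 < l) (x : ℝ × ℝ) :
    isNbr p l x (x + l • v) ↔ v ∈ nbrOffsets p := by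
  simp [isNbr, nbrOffsets, abs_mul, abs_of_pos hl, mul_comm _ l, hl.ne']

theorem finsum_mem_isNbr_eq {l : ℝ} (hl : 0 < l) (x : ℝ × ℝ) (g : ℝ × ℝ → ℝ) :
    ∑ᶠ x' ∈ {x' | isNbr p l x x'}, g x' = ∑ᶠ v ∈ nbrOffsets p, g (x + l • v) := by
  refine (finsum_mem_eq_of_bijOn (fun v ↦ x + l • v) ⟨fun v hv ↦ (isNbr_add_smul_iff hl x).2 hv,
    fun v _ w _ h ↦ smul_right_injective _ hl.ne' (add_left_cancel h), fun x' hx' ↦ ?_⟩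
    fun _ _ ↦ rfl).symm
  have hx' : x + l • (l⁻¹ • (x' - x)) = x' := by rw [smul_inv_smul₀ hl.ne', add_sub_cancel]
  refine ⟨l⁻¹ • (x' - x), (isNbr_add_smul_iff hl x).1 ?_, hx'⟩
  rwa [hx']

theorem finite_setOf_abs_eq (c : ℝ) : {t : ℝ | |t| = c}.Finite :=
  (Set.toFinite {c, -c}).subset fun _ ht ↦ eq_or_eq_neg_of_abs_eq ht

theorem ncard_setOf_abs_eq {c : ℝ} (hc : 0 ≤ c) :
    {t : ℝ | |t| = c}.ncard = if c = 0 then 1 else 2 := by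
  split_ifs with h0
  · simp [h0]
  · have : {t : ℝ | |t| = c} = {c, -c} := by ext t; simp [abs_eq hc]
    rw [this, Set.ncard_pair]
    intro h
    exact h0 (by linarith)

theorem finite_nbrOffsets (p : ℤ × ℤ) : (nbrOffsets p).Finite :=
  ((finite_setOf_abs_eq _).prod (finite_setOf_abs_eq _)).union
    ((finite_setOf_abs_eq _).prod (finite_setOf_abs_eq _))

theorem ncard_nbrOffsets (hp1 : 0 ≤ p.1) (hp2 : p.1 ≤ p.2) :
    ((nbrOffsets p).ncard : ℝ) = 8 * cP p := by
  have h1 : (0 : ℝ) ≤ p.1 := by exact_mod_cast hp1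
  have h2 : (0 : ℝ) ≤ p.2 := by exact_mod_cast hp1.trans hp2
  rcases hp2.eq_or_lt with heq | hlt
  · rw [nbrOffsets, ← heq, Set.union_self, Set.ncard_prod, ncard_setOf_abs_eq h1]
    by_cases h0 : p.1 = 0 <;> norm_num [cP, h0, ← heq]
  · have hdisj : Disjoint ({t : ℝ | |t| = p.1} ×ˢ {t : ℝ | |t| = p.2})
        ({t : ℝ | |t| = p.2} ×ˢ {t : ℝ | |t| = p.1}) := by
      refine Set.disjoint_prod.2 (Or.inl (Set.disjoint_left.2 fun t ht ht' ↦ ?_))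
      have : (p.1 : ℝ) < p.2 := by exact_mod_cast hlt
      simp only [Set.mem_ofPred_eq] at ht ht'
      linarith
    rw [nbrOffsets, Set.ncard_union_eq hdisj ((finite_setOf_abs_eq _).prod (finite_setOf_abs_eq _))
      ((finite_setOf_abs_eq _).prod (finite_setOf_abs_eq _)), Set.ncard_prod, Set.ncard_prod,
      ncard_setOf_abs_eq h1, ncard_setOf_abs_eq h2]
    by_cases h0 : p.1 = 0 <;> norm_num [cP, h0, hlt.ne, (hp1.trans_lt hlt).ne']

theorem neg_fst_mem_nbrOffsets (hv : v ∈ nbrOffsets p) : (-v.1, v.2) ∈ nbrOffsets p := by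
  simpa [nbrOffsets, abs_neg] using hv

theorem swap_mem_nbrOffsets (hv : v ∈ nbrOffsets p) : v.swap ∈ nbrOffsets p := by
  simp only [nbrOffsets, Set.mem_union, Set.mem_prod, Set.mem_ofPred_eq, Prod.fst_swap,
    Prod.snd_swap] at hv ⊢
  tauto

theorem sq_add_sq_of_mem_nbrOffsets (hv : v ∈ nbrOffsets p) :
    v.1 ^ 2 + v.2 ^ 2 = (p.1 : ℝ) ^ 2 + (p.2 : ℝ) ^ 2 := by
  rw [← sq_abs v.1, ← sq_abs v.2]
  rcases hv with ⟨h1, h2⟩ | ⟨h1, h2⟩ <;> rw [h1, h2]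
  ring

end Neighbors

/-- sum of squared differences over `p`-neighbors recovers `4‖p‖²c_p|∇f|²`. -/
theorem stmt12 (p : ℤ × ℤ) (hp1 : 0 ≤ p.1) (hp2 : p.1 ≤ p.2)
    (Ω : Set (ℝ × ℝ)) (hΩ : IsOpen Ω) (f : ℝ × ℝ → ℝ) (hf : ContDiffOn ℝ 1 f Ω)
    (x : ℝ × ℝ) (hx : x ∈ Ω) :
    Filter.Tendsto
      (fun l : ℝ => (1 / l ^ 2) *
        ∑ᶠ x' ∈ {x' : ℝ × ℝ | isNbr p l x x'}, (Iavg f x' l - Iavg f x l) ^ 2)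
      (𝓝[>] (0 : ℝ))
      (𝓝 (4 * ((p.1 : ℝ) ^ 2 + (p.2 : ℝ) ^ 2) * cP p *
        ((pd1 f x) ^ 2 + (pd2 f x) ^ 2))) := by
  have hstrict : HasStrictFDerivAt f (fderiv ℝ f x) x :=
    (hf.contDiffAt (hΩ.mem_nhds hx)).hasStrictFDerivAt one_ne_zero
  set F := (finite_nbrOffsets p).toFinset
  have hlim := tendsto_finsetSum F fun v _ ↦ tendsto_sq_Iavg_sub_div_sq hstrict v
  have hval : ∑ v ∈ F, fderiv ℝ f x v ^ 2 =
      4 * ((p.1 : ℝ) ^ 2 + (p.2 : ℝ) ^ 2) * cP p * ((pd1 f x) ^ 2 + (pd2 f x) ^ 2) := by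
    have hgrad (v : ℝ × ℝ) : fderiv ℝ f x v = pd1 f x * v.1 + pd2 f x * v.2 :=
      (fderiv ℝ f x).apply_eq_mul_fst_add_mul_snd v
    simp only [hgrad]
    have hmem {v : ℝ × ℝ} : v ∈ F ↔ v ∈ nbrOffsets p := Set.Finite.mem_toFinset _
    rw [sum_linear_sq_of_dihedral_invariant F
      (fun v hv ↦ hmem.2 (neg_fst_mem_nbrOffsets (hmem.1 hv)))
      (fun v hv ↦ hmem.2 (swap_mem_nbrOffsets (hmem.1 hv)))
      (fun v hv ↦ sq_add_sq_of_mem_nbrOffsets (hmem.1 hv)),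
      ← Set.ncard_eq_toFinset_card _ (finite_nbrOffsets p), ncard_nbrOffsets hp1 hp2]
    ring
  rw [← hval]
  refine hlim.congr' (eventually_nhdsWithin_of_forall fun l hl ↦ ?_)
  beta_reduce
  rw [finsum_mem_isNbr_eq hl, finsum_mem_eq_finite_toFinset_sum _ (finite_nbrOffsets p),
    Finset.mul_sum]
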